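/- arXiv:2507.15747 — 2 statements merged into one kernel-verified Lean document; each statement's English description precedes it below -/
import Mathlib

section
/- For every 0 < s < N/2 and every x ∈ ℝ^N, ∫_{ℝ^N} |x−y|^{−2s} (1+|y|²)^{−(N−s)} dy = ℐ(s) (1+|x|²)^{−s}, where ℐ(s) := π^{N/2} Γ((N−2s)/2) / Γ(N−s). -/
noncomputable section
open MeasureTheory Real

/-- `ℝ^N` as a Euclidean space. -/
abbrev Eu (N : ℕ) := EuclideanSpace ℝ (Fin N)

/-!
Subordination: `Γ(s) d^{-2s} = u^s ∫ v^{s-1} e^{-u v d²} dv` for every `u > 0`, and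
`Γ(N-s) (1+|y|²)^{-(N-s)} = ∫ u^{N-s-1} e^{-u(1+|y|²)} du`. Inserting both, with the same `u`,
and integrating in `y` first turns the `y`-integral into a Gaussian one,
`∫ e^{-u|y|² - uv|x-y|²} dy = (π / (u(1+v)))^{N/2} e^{-uv|x|²/(1+v)}`. The `u`-integral is then a
Gamma integral, and what is left is the Beta integral
`∫ v^{s-1} (1 + (1+|x|²) v)^{-N/2} dv = (1+|x|²)^{-s} Γ(s) Γ(N/2-s) / Γ(N/2)`.
-/

open Set Filter

lemma eq_ofReal_of_ofReal_mul_eq {c x : ℝ} {L : ENNReal} (hc : 0 < c)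
    (h : ENNReal.ofReal c * L = ENNReal.ofReal (c * x)) : L = ENNReal.ofReal x := by
  rwa [ENNReal.ofReal_mul hc.le, ENNReal.mul_right_inj (by simpa using hc) ENNReal.ofReal_ne_top]
    at h

lemma lintegral_rpow_mul_exp_neg_mul_Ioi {p b : ℝ} (hp : 0 < p) (hb : 0 < b) :
    ∫⁻ t in Ioi 0, ENNReal.ofReal (t ^ (p - 1) * exp (-(b * t))) =
      ENNReal.ofReal (b ^ (-p) * Gamma p) := by
  have hint : IntegrableOn (fun t : ℝ => t ^ (p - 1) * exp (-(b * t))) (Ioi 0) := by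
    simpa only [rpow_one, neg_mul] using
      integrableOn_rpow_mul_exp_neg_mul_rpow (by linarith : -1 < p - 1) one_pos hb
  have hnonneg : 0 ≤ᵐ[volume.restrict (Ioi 0)] fun t : ℝ => t ^ (p - 1) * exp (-(b * t)) :=
    ae_restrict_of_forall_mem measurableSet_Ioi fun t (ht : 0 < t) => by positivity
  rw [← ofReal_integral_eq_lintegral_ofReal hint hnonneg, integral_rpow_mul_exp_neg_mul_Ioi hp hb,
    one_div, inv_rpow hb.le, rpow_neg hb.le]

lemma lintegral_const_mul_rpow_mul_exp_neg_mul_Ioi {c p b : ℝ} (hc : 0 ≤ c) (hp : 0 < p)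
    (hb : 0 < b) :
    ∫⁻ t in Ioi 0, ENNReal.ofReal (c * (t ^ (p - 1) * exp (-(b * t)))) =
      ENNReal.ofReal (c * (b ^ (-p) * Gamma p)) := by
  simp_rw [ENNReal.ofReal_mul hc]
  rw [lintegral_const_mul'' _ (by fun_prop), ← ENNReal.ofReal_mul (by positivity),
    lintegral_rpow_mul_exp_neg_mul_Ioi hp hb, ENNReal.ofReal_mul hc]

lemma lintegral_lintegral_lintegral_comm {α β γ : Type*} [MeasurableSpace α] [MeasurableSpace β]
    [MeasurableSpace γ] {μ : Measure α} {ν : Measure β} {ρ : Measure γ} [SFinite μ] [SFinite ν]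
    [SFinite ρ] {f : α → β → γ → ENNReal}
    (hf : Measurable fun p : α × β × γ => f p.1 p.2.1 p.2.2) :
    ∫⁻ x, ∫⁻ y, ∫⁻ z, f x y z ∂ρ ∂ν ∂μ = ∫⁻ z, ∫⁻ y, ∫⁻ x, f x y z ∂μ ∂ν ∂ρ := by
  have hxy : Measurable fun p : α × β => ∫⁻ z, f p.1 p.2 z ∂ρ :=
    (hf.comp MeasurableEquiv.prodAssoc.measurable).lintegral_prod_right'
  have hxz (y : β) : Measurable (Function.uncurry fun x z => f x y z) :=
    hf.comp (measurable_fst.prodMk (measurable_const.prodMk measurable_snd))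
  have hyz : Measurable fun p : β × γ => ∫⁻ x, f x p.1 p.2 ∂μ :=
    (hf.comp (measurable_snd.prodMk
      (measurable_fst.fst.prodMk measurable_fst.snd))).lintegral_prod_right'
  rw [lintegral_lintegral_swap hxy.aemeasurable]
  refine (lintegral_congr fun y => lintegral_lintegral_swap (hxz y).aemeasurable).trans ?_
  exact lintegral_lintegral_swap hyz.aemeasurable

lemma lintegral_rpow_mul_one_add_mul_rpow_neg_Ioi {p r a : ℝ} (hp : 0 < p) (hpr : p < r)
    (ha : 0 < a) :
    ∫⁻ v in Ioi 0, ENNReal.ofReal (v ^ (p - 1) * (1 + a * v) ^ (-r)) =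
      ENNReal.ofReal (a ^ (-p) * (Gamma p * Gamma (r - p) / Gamma r)) := by
  have hΓr : 0 < Gamma r := Gamma_pos_of_pos (hp.trans hpr)
  refine eq_ofReal_of_ofReal_mul_eq hΓr ?_
  calc ENNReal.ofReal (Gamma r) * ∫⁻ v in Ioi 0, ENNReal.ofReal (v ^ (p - 1) * (1 + a * v) ^ (-r))
      = ∫⁻ v in Ioi 0, ∫⁻ u in Ioi 0,
          ENNReal.ofReal (v ^ (p - 1) * (u ^ (r - 1) * exp (-((1 + a * v) * u)))) := by
        rw [← lintegral_const_mul'' _ (by fun_prop)]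
        refine setLIntegral_congr_fun measurableSet_Ioi fun v (hv : 0 < v) => ?_
        rw [lintegral_const_mul_rpow_mul_exp_neg_mul_Ioi (by positivity) (hp.trans hpr)
          (by positivity), ← ENNReal.ofReal_mul hΓr.le]
        ring_nf
    _ = ∫⁻ u in Ioi 0, ∫⁻ v in Ioi 0,
          ENNReal.ofReal (v ^ (p - 1) * (u ^ (r - 1) * exp (-((1 + a * v) * u)))) :=
        lintegral_lintegral_swap (by fun_prop)
    _ = ∫⁻ u in Ioi 0, ENNReal.ofReal (u ^ (r - 1) * exp (-u) * ((a * u) ^ (-p) * Gamma p)) := by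
        refine setLIntegral_congr_fun measurableSet_Ioi fun u (hu : 0 < u) => ?_
        rw [← lintegral_const_mul_rpow_mul_exp_neg_mul_Ioi (by positivity) hp (by positivity)]
        refine setLIntegral_congr_fun measurableSet_Ioi fun v _ => ?_
        rw [show -((1 + a * v) * u) = -u + -(a * u * v) by ring, exp_add]
        ring_nf
    _ = ∫⁻ u in Ioi 0,
          ENNReal.ofReal (a ^ (-p) * Gamma p * (u ^ (r - p - 1) * exp (-(1 * u)))) := by
        refine setLIntegral_congr_fun measurableSet_Ioi fun u (hu : 0 < u) => ?_
        rw [mul_rpow ha.le hu.le, show r - p - 1 = (r - 1) + -p by ring, rpow_add hu, one_mul]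
        ring_nf
    _ = ENNReal.ofReal (Gamma r * (a ^ (-p) * (Gamma p * Gamma (r - p) / Gamma r))) := by
        rw [lintegral_const_mul_rpow_mul_exp_neg_mul_Ioi (by positivity) (by linarith) one_pos,
          one_rpow]
        congr 1
        field_simp

lemma ofReal_Gamma_mul_Gamma_mul_rpow_mul_rpow_eq_lintegral_lintegral {n s d b : ℝ}
    (hs0 : 0 < s) (hsn : s < n) (hd : 0 < d) (hb : 0 ≤ b) :
    ENNReal.ofReal (Gamma s * Gamma (n - s) * (d ^ (-(2 * s)) * (1 + b) ^ (-(n - s)))) =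
      ∫⁻ u in Ioi 0, ∫⁻ v in Ioi 0, ENNReal.ofReal
        (u ^ (n - 1) * v ^ (s - 1) * exp (-u) * exp (-(u * b + u * v * d ^ 2))) := by
  have hsq : (d ^ 2) ^ (-s) = d ^ (-(2 * s)) := by
    rw [← rpow_natCast, ← rpow_mul hd.le]
    norm_num
  calc _ = ∫⁻ u in Ioi 0, ENNReal.ofReal (Gamma s * d ^ (-(2 * s)) *
          (u ^ (n - s - 1) * exp (-((1 + b) * u)))) := by
        rw [lintegral_const_mul_rpow_mul_exp_neg_mul_Ioi (by positivity) (by linarith)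
          (by positivity)]
        ring_nf
    _ = ∫⁻ u in Ioi 0, ENNReal.ofReal (u ^ (n - 1) * exp (-u) * exp (-(u * b)) *
          ((u * d ^ 2) ^ (-s) * Gamma s)) := by
        refine setLIntegral_congr_fun measurableSet_Ioi fun u (hu : 0 < u) => ?_
        rw [mul_rpow hu.le (by positivity), show n - s - 1 = (n - 1) + -s by ring, rpow_add hu,
          hsq, show -((1 + b) * u) = -u + -(u * b) by ring, exp_add]
        ring_nf
    _ = _ := by
        refine setLIntegral_congr_fun measurableSet_Ioi fun u (hu : 0 < u) => ?_
        rw [← lintegral_const_mul_rpow_mul_exp_neg_mul_Ioi (by positivity) hs0 (by positivity)]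
        refine setLIntegral_congr_fun measurableSet_Ioi fun v _ => ?_
        rw [show -(u * b + u * v * d ^ 2) = -(u * b) + -(u * d ^ 2 * v) by ring, exp_add]
        ring_nf

lemma norm_sq_mul_add_norm_sub_sq_mul {V : Type*} [NormedAddCommGroup V] [InnerProductSpace ℝ V]
    (x y : V) {a b : ℝ} (hab : a + b ≠ 0) :
    a * ‖y‖ ^ 2 + b * ‖x - y‖ ^ 2 =
      (a + b) * ‖y - (b / (a + b)) • x‖ ^ 2 + a * b / (a + b) * ‖x‖ ^ 2 := by
  rw [norm_sub_sq_real, norm_sub_sq_real, real_inner_smul_right, real_inner_comm, norm_smul,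
    mul_pow, Real.norm_eq_abs, sq_abs]
  field_simp
  ring

section FiniteDimensional

variable {V : Type*} [NormedAddCommGroup V] [InnerProductSpace ℝ V] [FiniteDimensional ℝ V]
  [MeasurableSpace V] [BorelSpace V]

lemma lintegral_exp_neg_mul_norm_sq {b : ℝ} (hb : 0 < b) :
    ∫⁻ v : V, ENNReal.ofReal (exp (-(b * ‖v‖ ^ 2))) =
      ENNReal.ofReal ((π / b) ^ (Module.finrank ℝ V / 2 : ℝ)) := by
  have hval := GaussianFourier.integral_rexp_neg_mul_sq_norm (V := V) hb
  simp only [neg_mul] at hval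
  have hint : Integrable fun v : V => exp (-(b * ‖v‖ ^ 2)) :=
    Integrable.of_integral_ne_zero (by rw [hval]; positivity)
  rw [← ofReal_integral_eq_lintegral_ofReal hint (Eventually.of_forall fun v => by positivity),
    hval]

lemma lintegral_exp_neg_mul_norm_sq_add_mul_norm_sub_sq (x : V) {a b : ℝ} (ha : 0 < a)
    (hb : 0 < b) :
    ∫⁻ y : V, ENNReal.ofReal (exp (-(a * ‖y‖ ^ 2 + b * ‖x - y‖ ^ 2))) =
      ENNReal.ofReal ((π / (a + b)) ^ (Module.finrank ℝ V / 2 : ℝ) *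
        exp (-(a * b / (a + b) * ‖x‖ ^ 2))) := by
  have hab : 0 < a + b := add_pos ha hb
  simp_rw [norm_sq_mul_add_norm_sub_sq_mul x _ hab.ne', neg_add, exp_add,
    ENNReal.ofReal_mul (exp_pos _).le]
  rw [lintegral_mul_const'' _ (by fun_prop),
    lintegral_sub_right_eq_self (fun y : V => ENNReal.ofReal (exp (-((a + b) * ‖y‖ ^ 2)))),
    lintegral_exp_neg_mul_norm_sq hab, ← ENNReal.ofReal_mul (by positivity)]

local notation "n" => (Module.finrank ℝ V : ℝ)

lemma lintegral_Ioi_lintegral_rpow_mul_gaussian [Nontrivial V] (s : ℝ) (x : V) {v : ℝ}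
    (hv : 0 < v) :
    ∫⁻ u in Ioi 0, ∫⁻ y : V, ENNReal.ofReal
        (u ^ (n - 1) * v ^ (s - 1) * exp (-u) * exp (-(u * ‖y‖ ^ 2 + u * v * ‖x - y‖ ^ 2))) =
      ENNReal.ofReal (π ^ (n / 2) * Gamma (n / 2) *
        (v ^ (s - 1) * (1 + (1 + ‖x‖ ^ 2) * v) ^ (-(n / 2)))) := by
  have hn : 0 < n / 2 := by have := Module.finrank_pos (R := ℝ) (M := V); positivity
  have h1v : 0 < 1 + v := by linarith
  calc _ = ∫⁻ u in Ioi 0, ENNReal.ofReal (u ^ (n - 1) * v ^ (s - 1) * exp (-u) *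
          ((π / (u + u * v)) ^ (n / 2) * exp (-(u * (u * v) / (u + u * v) * ‖x‖ ^ 2)))) := by
        refine setLIntegral_congr_fun measurableSet_Ioi fun u (hu : 0 < u) => ?_
        simp_rw [ENNReal.ofReal_mul (by positivity : 0 ≤ u ^ (n - 1) * v ^ (s - 1) * exp (-u))]
        rw [lintegral_const_mul'' _ (by fun_prop),
          lintegral_exp_neg_mul_norm_sq_add_mul_norm_sub_sq x hu (by positivity)]
    _ = ∫⁻ u in Ioi 0, ENNReal.ofReal (π ^ (n / 2) * v ^ (s - 1) * (1 + v) ^ (-(n / 2)) *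
          (u ^ (n / 2 - 1) * exp (-((1 + (1 + ‖x‖ ^ 2) * v) / (1 + v) * u)))) := by
        refine setLIntegral_congr_fun measurableSet_Ioi fun u (hu : 0 < u) => ?_
        have hpow : u ^ (n - 1) * (π / (u + u * v)) ^ (n / 2) =
            π ^ (n / 2) * (1 + v) ^ (-(n / 2)) * u ^ (n / 2 - 1) := by
          rw [show u + u * v = u * (1 + v) by ring, div_rpow pi_pos.le (by positivity),
            mul_rpow hu.le h1v.le, show n - 1 = (n / 2 - 1) + n / 2 by ring, rpow_add hu,
            rpow_neg h1v.le]
          field_simp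
        have hexp : exp (-u) * exp (-(u * (u * v) / (u + u * v) * ‖x‖ ^ 2)) =
            exp (-((1 + (1 + ‖x‖ ^ 2) * v) / (1 + v) * u)) := by
          rw [← exp_add]
          congr 1
          field_simp
          ring
        congr 1
        linear_combination (v ^ (s - 1) * exp (-u) *
          exp (-(u * (u * v) / (u + u * v) * ‖x‖ ^ 2))) * hpow +
          (π ^ (n / 2) * v ^ (s - 1) * (1 + v) ^ (-(n / 2)) * u ^ (n / 2 - 1)) * hexp
    _ = _ := by
        rw [lintegral_const_mul_rpow_mul_exp_neg_mul_Ioi (by positivity) hn (by positivity)]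
        have hmerge : (1 + v) ^ (-(n / 2)) * ((1 + (1 + ‖x‖ ^ 2) * v) / (1 + v)) ^ (-(n / 2)) =
            (1 + (1 + ‖x‖ ^ 2) * v) ^ (-(n / 2)) := by
          rw [← mul_rpow h1v.le (by positivity), mul_div_cancel₀ _ h1v.ne']
        congr 1
        linear_combination (π ^ (n / 2) * v ^ (s - 1) * Gamma (n / 2)) * hmerge

theorem lintegral_rpow_norm_sub_mul_one_add_norm_sq_rpow {s : ℝ} (hs0 : 0 < s) (hsn : s < n / 2)
    (x : V) :
    ∫⁻ y : V, ENNReal.ofReal (‖x - y‖ ^ (-(2 * s)) * (1 + ‖y‖ ^ 2) ^ (-(n - s))) =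
      ENNReal.ofReal
        (π ^ (n / 2) * Gamma ((n - 2 * s) / 2) / Gamma (n - s) * (1 + ‖x‖ ^ 2) ^ (-s)) := by
  have : Nontrivial V :=
    Module.nontrivial_of_finrank_pos (R := ℝ) (by exact_mod_cast (by linarith : (0 : ℝ) < n))
  have hΓs : 0 < Gamma s := Gamma_pos_of_pos hs0
  have hΓns : 0 < Gamma (n - s) := Gamma_pos_of_pos (by linarith)
  have hΓ : 0 < Gamma s * Gamma (n - s) := mul_pos hΓs hΓns
  -- At `y = x` the integrand is `0` (as `0 ^ (-2s) = 0`), but its subordination is `∞`.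
  have hae : ∀ᵐ y : V, y ≠ x := compl_mem_ae_iff.mpr (measure_singleton x)
  refine eq_ofReal_of_ofReal_mul_eq hΓ ?_
  calc _ = ∫⁻ y : V, ENNReal.ofReal (Gamma s * Gamma (n - s) *
          (‖x - y‖ ^ (-(2 * s)) * (1 + ‖y‖ ^ 2) ^ (-(n - s)))) := by
        simp_rw [ENNReal.ofReal_mul hΓ.le]
        exact (lintegral_const_mul'' _ (by fun_prop)).symm
    _ = ∫⁻ y : V, ∫⁻ u in Ioi 0, ∫⁻ v in Ioi 0, ENNReal.ofReal
          (u ^ (n - 1) * v ^ (s - 1) * exp (-u) * exp (-(u * ‖y‖ ^ 2 + u * v * ‖x - y‖ ^ 2))) :=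
        lintegral_congr_ae <| hae.mono fun y hy =>
          ofReal_Gamma_mul_Gamma_mul_rpow_mul_rpow_eq_lintegral_lintegral hs0 (by linarith)
            (norm_pos_iff.mpr (sub_ne_zero.mpr hy.symm)) (sq_nonneg ‖y‖)
    _ = ∫⁻ v in Ioi 0, ∫⁻ u in Ioi 0, ∫⁻ y : V, ENNReal.ofReal
          (u ^ (n - 1) * v ^ (s - 1) * exp (-u) * exp (-(u * ‖y‖ ^ 2 + u * v * ‖x - y‖ ^ 2))) :=
        lintegral_lintegral_lintegral_comm (by fun_prop)
    _ = ∫⁻ v in Ioi 0, ENNReal.ofReal (π ^ (n / 2) * Gamma (n / 2) *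
          (v ^ (s - 1) * (1 + (1 + ‖x‖ ^ 2) * v) ^ (-(n / 2)))) :=
        setLIntegral_congr_fun measurableSet_Ioi fun v hv =>
          lintegral_Ioi_lintegral_rpow_mul_gaussian s x hv
    _ = _ := by
        simp_rw [ENNReal.ofReal_mul (by positivity : (0 : ℝ) ≤ π ^ (n / 2) * Gamma (n / 2))]
        rw [lintegral_const_mul'' _ (by fun_prop),
          lintegral_rpow_mul_one_add_mul_rpow_neg_Ioi hs0 hsn (by positivity),
          ← ENNReal.ofReal_mul (by positivity)]
        have hΓn : 0 < Gamma (n / 2) := Gamma_pos_of_pos (by linarith)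
        rw [show n / 2 - s = (n - 2 * s) / 2 by ring]
        congr 1
        field_simp

theorem integral_rpow_norm_sub_mul_one_add_norm_sq_rpow {s : ℝ} (hs0 : 0 < s) (hsn : s < n / 2)
    (x : V) :
    ∫ y : V, ‖x - y‖ ^ (-(2 * s)) * (1 + ‖y‖ ^ 2) ^ (-(n - s)) =
      π ^ (n / 2) * Gamma ((n - 2 * s) / 2) / Gamma (n - s) * (1 + ‖x‖ ^ 2) ^ (-s) := by
  have hΓ : 0 < Gamma ((n - 2 * s) / 2) := Gamma_pos_of_pos (by linarith)
  have hΓ' : 0 < Gamma (n - s) := Gamma_pos_of_pos (by linarith)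
  rw [integral_eq_lintegral_of_nonneg_ae (Eventually.of_forall fun y => by positivity)
    (by fun_prop), lintegral_rpow_norm_sub_mul_one_add_norm_sq_rpow hs0 hsn x,
    ENNReal.toReal_ofReal (by positivity)]

end FiniteDimensional

/-- For every `0 < s < N/2` and every `x ∈ ℝ^N`,
`∫_{ℝ^N} |x−y|^{−2s} (1+|y|²)^{−(N−s)} dy = ℐ(s) (1+|x|²)^{−s}`,
where `ℐ(s) := π^{N/2} Γ((N−2s)/2) / Γ(N−s)`. -/
theorem riesz_convolution_identity (N : ℕ) (s : ℝ) (hs0 : 0 < s) (hsN : s < (N : ℝ) / 2) :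
    ∀ x : Eu N,
      ∫ y : Eu N, ‖x - y‖ ^ (-(2 * s)) * (1 + ‖y‖ ^ 2) ^ (-((N : ℝ) - s)) =
        (π ^ ((N : ℝ) / 2) * Real.Gamma (((N : ℝ) - 2 * s) / 2) / Real.Gamma ((N : ℝ) - s)) *
          (1 + ‖x‖ ^ 2) ^ (-s) := by
  intro x
  have h := integral_rpow_norm_sub_mul_one_add_norm_sq_rpow (V := Eu N) hs0
    (by rwa [finrank_euclideanSpace_fin]) x
  rwa [finrank_euclideanSpace_fin] at h
end
end

section
/- (Interaction estimate for products of decaying weights) Let N ≥ 1 and α ≥ 1, β ≥ 1 be constants. For distinct points ξ_i, ξ_j ∈ ℝ^N define f_{i,j}(x) := (1+|x−ξ_i|)^{−α}(1+|x−ξ_j|)^{−β}. Then for every 0 < σ ≤ min{α, β} there is a constant C > 0, depending only on N, α, β, σ, such that for all distinct ξ_i, ξ_j and all x ∈ ℝ^N, f_{i,j}(x) ≤ C |ξ_i−ξ_j|^{−σ} ( (1+|x−ξ_i|)^{−(α+β−σ)} + (1+|x−ξ_j|)^{−(α+β−σ)} ). -/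
noncomputable section
open MeasureTheory Real

lemma prodle (p q a b : ℝ) (hp : 0 ≤ p) (hq : 0 ≤ q) (ha : 0 ≤ a) (hb : 0 ≤ b) :
    (1+a) ^ (-p) * (1+b) ^ (-q) ≤ (1+a) ^ (-(p+q)) + (1+b) ^ (-(p+q)) := by
  have h1a : (0:ℝ) < 1 + a := by linarith
  have h1b : (0:ℝ) < 1 + b := by linarith
  rcases le_total a b with h | h
  · have hba : (1+b) ^ (-q) ≤ (1+a) ^ (-q) :=
      rpow_le_rpow_of_nonpos h1a (by linarith) (by linarith)
    calc (1+a) ^ (-p) * (1+b) ^ (-q) ≤ (1+a) ^ (-p) * (1+a) ^ (-q) := by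
          exact mul_le_mul_of_nonneg_left hba (rpow_nonneg h1a.le _)
      _ = (1+a) ^ (-(p+q)) := by rw [← rpow_add h1a]; ring_nf
      _ ≤ _ := le_add_of_nonneg_right (rpow_nonneg h1b.le _)
  · have hba : (1+a) ^ (-p) ≤ (1+b) ^ (-p) :=
      rpow_le_rpow_of_nonpos h1b (by linarith) (by linarith)
    calc (1+a) ^ (-p) * (1+b) ^ (-q) ≤ (1+b) ^ (-p) * (1+b) ^ (-q) := by
          exact mul_le_mul_of_nonneg_right hba (rpow_nonneg h1b.le _)
      _ = (1+b) ^ (-(p+q)) := by rw [← rpow_add h1b]; ring_nf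
      _ ≤ _ := le_add_of_nonneg_left (rpow_nonneg h1a.le _)

lemma extract (σ d a : ℝ) (hσ0 : 0 < σ) (hd : 0 < d) (ha2 : d / 2 ≤ a) :
    (1+a) ^ (-σ) ≤ 2 ^ σ * d ^ (-σ) := by
  have h1a : (0:ℝ) < 1 + a := by linarith
  have : (1+a) ^ (-σ) ≤ (d/2) ^ (-σ) :=
    rpow_le_rpow_of_nonpos (by linarith) (by linarith) (by linarith)
  refine this.trans_eq ?_
  rw [Real.div_rpow hd.le (by norm_num), Real.rpow_neg (by norm_num : (0:ℝ) ≤ 2)]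
  field_simp


/-- (Interaction estimate for products of decaying weights.) Let `N ≥ 1` and `α, β ≥ 1`.
For every `0 < σ ≤ min{α, β}` there is `C > 0`, depending only on `N, α, β, σ`, such that
for all distinct `ξ_i, ξ_j ∈ ℝ^N` and all `x`,
`(1+|x−ξ_i|)^{−α}(1+|x−ξ_j|)^{−β}
  ≤ C |ξ_i−ξ_j|^{−σ} ((1+|x−ξ_i|)^{−(α+β−σ)} + (1+|x−ξ_j|)^{−(α+β−σ)})`. -/
theorem interaction_estimate (N : ℕ) (hN : 1 ≤ N) (α β σ : ℝ)
    (hα : 1 ≤ α) (hβ : 1 ≤ β) (hσ0 : 0 < σ) (hσ : σ ≤ min α β) :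
    ∃ C > 0, ∀ ξi ξj : Eu N, ξi ≠ ξj → ∀ x : Eu N,
      (1 + ‖x - ξi‖) ^ (-α) * (1 + ‖x - ξj‖) ^ (-β) ≤
        C * ‖ξi - ξj‖ ^ (-σ) *
          ((1 + ‖x - ξi‖) ^ (-(α + β - σ)) + (1 + ‖x - ξj‖) ^ (-(α + β - σ))) := by
  obtain ⟨hσα, hσβ⟩ := le_min_iff.mp hσ
  refine ⟨2 ^ σ, rpow_pos_of_pos two_pos σ, ?_⟩
  intro ξi ξj hne x
  set a := ‖x - ξi‖ with ha_def
  set b := ‖x - ξj‖ with hb_def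
  set d := ‖ξi - ξj‖ with hd_def
  have ha : 0 ≤ a := norm_nonneg _
  have hb : 0 ≤ b := norm_nonneg _
  have hd : 0 < d := norm_pos_iff.mpr (sub_ne_zero.mpr hne)
  have h1a : (0:ℝ) < 1 + a := by linarith
  have h1b : (0:ℝ) < 1 + b := by linarith
  have hab : d ≤ a + b := by
    calc d = ‖(ξi - x) + (x - ξj)‖ := by rw [sub_add_sub_cancel]
      _ ≤ ‖ξi - x‖ + ‖x - ξj‖ := norm_add_le _ _
      _ = a + b := by rw [norm_sub_rev]
  have hcase : d / 2 ≤ a ∨ d / 2 ≤ b := by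
    rcases le_or_gt (d/2) a with h | h
    · exact Or.inl h
    · exact Or.inr (by linarith)
  rcases hcase with hca | hcb
  · have key : (1+a) ^ (-α) * (1+b) ^ (-β)
        = (1+a) ^ (-σ) * ((1+a) ^ (-(α-σ)) * (1+b) ^ (-β)) := by
      rw [← mul_assoc, ← rpow_add h1a]; ring_nf
    rw [key]
    have h1 := extract σ d a hσ0 hd hca
    have h2 := prodle (α-σ) β a b (by linarith) (by linarith) ha hb
    have hE : -((α-σ)+β) = -(α+β-σ) := by ring
    rw [hE] at h2
    calc (1+a) ^ (-σ) * ((1+a) ^ (-(α-σ)) * (1+b) ^ (-β))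
        ≤ (2 ^ σ * d ^ (-σ)) * ((1+a) ^ (-(α+β-σ)) + (1+b) ^ (-(α+β-σ))) := by
          apply mul_le_mul h1 h2
          · positivity
          · positivity
      _ = 2 ^ σ * d ^ (-σ) * ((1+a) ^ (-(α+β-σ)) + (1+b) ^ (-(α+β-σ))) := by ring
  · have key : (1+a) ^ (-α) * (1+b) ^ (-β)
        = (1+b) ^ (-σ) * ((1+a) ^ (-α) * (1+b) ^ (-(β-σ))) := by
      rw [show (1+a) ^ (-α) * (1+b) ^ (-(β-σ)) = (1+b) ^ (-(β-σ)) * (1+a) ^ (-α) from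
        mul_comm _ _, ← mul_assoc, ← rpow_add h1b]; ring_nf
    rw [key]
    have h1 := extract σ d b hσ0 hd hcb
    have h2 := prodle α (β-σ) a b (by linarith) (by linarith) ha hb
    have hE : -(α+(β-σ)) = -(α+β-σ) := by ring
    rw [hE] at h2
    calc (1+b) ^ (-σ) * ((1+a) ^ (-α) * (1+b) ^ (-(β-σ)))
        ≤ (2 ^ σ * d ^ (-σ)) * ((1+a) ^ (-(α+β-σ)) + (1+b) ^ (-(α+β-σ))) := by
          apply mul_le_mul h1 h2
          · positivity
          · positivity
      _ = 2 ^ σ * d ^ (-σ) * ((1+a) ^ (-(α+β-σ)) + (1+b) ^ (-(α+β-σ))) := by ring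
end
end
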